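/- arXiv:2008.09199 — 2 statements merged into one kernel-verified Lean document; each statement's English description precedes it below -/
import Mathlib

section
/- Let b be a κ-contracting geodesic ray with contracting constant c in a proper CAT(0) space. Then for every x ∈ X and every point y on b: d(x, x_b) + d(x_b, y) − c·κ(‖x_b‖) − 1 ≤ d(x, y) ≤ d(x, x_b) + d(x_b, y). -/
open Set Metric Filter ENNReal

noncomputable section

/-- The set of points lying on a geodesic from `x` to `y`; in a uniquely geodesic space
(such as a CAT(0) space) this is the geodesic segment `[x,y]`. -/
def seg {X : Type*} [MetricSpace X] (x y : X) : Set X :=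
  {z | dist x z + dist z y = dist x y}

/-- `X` is a geodesic metric space. -/
def GeodesicSpace (X : Type*) [MetricSpace X] : Prop :=
  ∀ x y : X, ∃ γ : ℝ → X, γ 0 = x ∧ γ (dist x y) = y ∧
    ∀ s ∈ Icc (0:ℝ) (dist x y), ∀ t ∈ Icc (0:ℝ) (dist x y), dist (γ s) (γ t) = |s - t|

/-- `X` is a CAT(0) space: a geodesic metric space satisfying the CN (Bruhat–Tits)
inequality (comparison of triangles with Euclidean ones). -/
def IsCAT0 (X : Type*) [MetricSpace X] : Prop :=
  GeodesicSpace X ∧ ∀ x y z m : X, dist y m = dist y z / 2 → dist m z = dist y z / 2 →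
    dist x m ^ 2 ≤ (dist x y ^ 2 + dist x z ^ 2) / 2 - dist y z ^ 2 / 4

/-- `b` restricted to `[0,∞)` is a geodesic ray (an isometric embedding of `[0,∞)`). -/
def IsGeodesicRay {X : Type*} [MetricSpace X] (b : ℝ → X) : Prop :=
  ∀ s t : ℝ, 0 ≤ s → 0 ≤ t → dist (b s) (b t) = |s - t|

/-- The image of the geodesic ray `b`. -/
def rayIm {X : Type*} [MetricSpace X] (b : ℝ → X) : Set X := b '' Ici 0

/-- `κ` is a sublinear function: monotone increasing, concave, `≥ 1`, with `κ(t)/t → 0`. -/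
structure IsSublinearFn (κ : ℝ → ℝ) : Prop where
  one_le : ∀ t : ℝ, 1 ≤ κ t
  mono : Monotone κ
  concave : ConcaveOn ℝ (Ici 0) κ
  sublinear : Tendsto (fun t => κ t / t) atTop (nhds 0)

/-- `π` is the nearest-point projection onto the geodesic ray `b`:
`π x` lies on `b` and realizes the distance from `x` to `b`. -/
def IsProj {X : Type*} [MetricSpace X] (b : ℝ → X) (π : X → X) : Prop :=
  ∀ x : X, π x ∈ rayIm b ∧ dist x (π x) = infDist x (rayIm b)

/-- The geodesic ray `b` (with projection `π`) is `κ`-contracting: there is `c ≥ 0` such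
that whenever `d(x,y) ≤ d(x,b)` we have `d(x_b, y_b) ≤ c·κ(‖x‖)`. -/
def KappaContracting {X : Type*} [MetricSpace X] (κ : ℝ → ℝ) (o : X) (b : ℝ → X)
    (π : X → X) : Prop :=
  ∃ c ≥ (0:ℝ), ∀ x y : X, dist x y ≤ infDist x (rayIm b) →
    dist (π x) (π y) ≤ c * κ (dist o x)

/-- `b` is `κ`-contracting with contracting constant `c` (projection form, Lemma 2.6):
whenever `d(x,y) < d(x,b)` we have `d(x_b, y_b) ≤ c·κ(‖x_b‖)`. -/
def KappaContractingWith {X : Type*} [MetricSpace X] (κ : ℝ → ℝ) (o : X) (b : ℝ → X)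
    (π : X → X) (c : ℝ) : Prop :=
  0 ≤ c ∧ ∀ x y : X, dist x y < infDist x (rayIm b) →
    dist (π x) (π y) ≤ c * κ (dist o (π x))


/-- Pythagorean inequality from iterated CN: if `b u` is a nearest point of the ray to `z`,
then `dist z (b u)^2 + t^2 ≤ dist z (b (u+t))^2` for admissible `t`. -/
lemma pyth_aux {X : Type*} [MetricSpace X] (hX : IsCAT0 X) {b : ℝ → X}
    (hb : IsGeodesicRay b) (z : X) {u : ℝ} (hu : 0 ≤ u)
    (he : dist z (b u) = infDist z (rayIm b)) :
    ∀ t : ℝ, 0 ≤ u + t → dist z (b u) ^ 2 + t ^ 2 ≤ dist z (b (u + t)) ^ 2 := by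
  have key : ∀ n : ℕ, ∀ t : ℝ, 0 ≤ u + t →
      dist z (b u) ^ 2 + (1 - (1/2:ℝ)^n) * t ^ 2 ≤ dist z (b (u + t)) ^ 2 := by
    intro n
    induction n with
    | zero =>
      intro t ht
      have h1 : dist z (b u) ≤ dist z (b (u + t)) := by
        rw [he]; exact infDist_le_dist_of_mem ⟨u + t, ht, rfl⟩
      have h0 : (0:ℝ) ≤ dist z (b u) := dist_nonneg
      simp only [pow_zero]
      nlinarith
    | succ n ih =>
      intro t ht
      have hmid : 0 ≤ u + t / 2 := by
        rcases le_total t 0 with h | h <;> nlinarith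
      have h1 := ih (t / 2) hmid
      have hd1 : dist (b u) (b (u + t / 2)) = |t| / 2 := by
        rw [hb u (u + t / 2) hu hmid,
          show u - (u + t / 2) = -(t/2) by ring, abs_neg, abs_div]
        simp [abs_of_nonneg]
      have hd2 : dist (b (u + t / 2)) (b (u + t)) = |t| / 2 := by
        rw [hb (u + t / 2) (u + t) hmid ht,
          show u + t / 2 - (u + t) = -(t/2) by ring, abs_neg, abs_div]
        simp [abs_of_nonneg]
      have hd3 : dist (b u) (b (u + t)) = |t| := by
        rw [hb u (u + t) hu ht, show u - (u + t) = -t by ring, abs_neg]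
      have hcn := hX.2 z (b u) (b (u + t)) (b (u + t / 2))
        (by rw [hd1, hd3]) (by rw [hd2, hd3])
      rw [hd3] at hcn
      have habs : |t| ^ 2 = t ^ 2 := sq_abs t
      rw [habs] at hcn
      have hp : ((1:ℝ)/2)^(n+1) = ((1:ℝ)/2)^n / 2 := by ring
      nlinarith [h1, hcn]
  intro t ht
  have hlim : Tendsto (fun n : ℕ => dist z (b u) ^ 2 + (1 - (1/2:ℝ)^n) * t ^ 2)
      atTop (nhds (dist z (b u) ^ 2 + (1 - 0) * t ^ 2)) :=
    Tendsto.const_add _ ((tendsto_const_nhds.sub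
      (tendsto_pow_atTop_nhds_zero_of_lt_one (by norm_num) (by norm_num))).mul_const _)
  have := le_of_tendsto' hlim (fun n => key n t ht)
  linarith

/-- Projection to the ray does not increase distance to points on the ray. -/
lemma proj_le_dist {X : Type*} [MetricSpace X] (hX : IsCAT0 X) {b : ℝ → X}
    (hb : IsGeodesicRay b) {π : X → X} (hπ : IsProj b π)
    (z : X) {y : X} (hy : y ∈ rayIm b) : dist (π z) y ≤ dist z y := by
  obtain ⟨u, hu, hbu⟩ := (hπ z).1
  obtain ⟨v, hv, hbv⟩ := hy
  have he : dist z (b u) = infDist z (rayIm b) := by rw [hbu]; exact (hπ z).2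
  have hp := pyth_aux hX hb z hu he (v - u) (by simpa using hv)
  rw [show u + (v - u) = v by ring, hbv] at hp
  have hproj : dist (π z) y = |u - v| := by rw [← hbu, ← hbv]; exact hb u v hu hv
  have h1 : |u - v| ^ 2 = (v - u) ^ 2 := by rw [sq_abs]; ring
  have h2 : dist (π z) y ^ 2 ≤ dist z y ^ 2 := by
    rw [hproj, h1]; nlinarith [dist_nonneg (x := z) (y := b u)]
  nlinarith [dist_nonneg (x := π z) (y := y), dist_nonneg (x := z) (y := y)]

/-- Lemma 3.4. For a `κ`-contracting geodesic ray `b` with contracting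
constant `c`, for all `x ∈ X` and `y` on `b`:
`d(x,x_b) + d(x_b,y) - c·κ(‖x_b‖) - 1 ≤ d(x,y) ≤ d(x,x_b) + d(x_b,y)`. -/
theorem dist_approx_of_contracting
    {X : Type*} [MetricSpace X] [ProperSpace X] (hX : IsCAT0 X)
    (o : X) (κ : ℝ → ℝ) (hκ : IsSublinearFn κ)
    (b : ℝ → X) (hb : IsGeodesicRay b) (hb0 : b 0 = o)
    (π : X → X) (hπ : IsProj b π)
    (c : ℝ) (hc : KappaContractingWith κ o b π c) :
    ∀ x : X, ∀ y ∈ rayIm b,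
      dist x (π x) + dist (π x) y - c * κ (dist o (π x)) - 1 ≤ dist x y ∧
      dist x y ≤ dist x (π x) + dist (π x) y := by
  intro x y hy
  have hinf : infDist x (rayIm b) = dist x (π x) := ((hπ x).2).symm
  have hxy_ge : dist x (π x) ≤ dist x y := by
    rw [← hinf]; exact infDist_le_dist_of_mem hy
  have hck : 0 ≤ c * κ (dist o (π x)) :=
    mul_nonneg hc.1 (le_trans zero_le_one (hκ.one_le _))
  refine ⟨?_, dist_triangle x (π x) y⟩
  by_cases hsmall : dist x (π x) ≤ 1/2
  · have htri : dist (π x) y ≤ dist (π x) x + dist x y := dist_triangle _ _ _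
    rw [dist_comm (π x) x] at htri
    linarith
  · push_neg at hsmall
    by_cases hclose : dist x y < dist x (π x)
    · have hcon := hc.2 x y (by rwa [hinf])
      have hpy : π y = y := by
        have h0 : dist y (π y) = 0 := by
          rw [(hπ y).2]; exact infDist_zero_of_mem hy
        rw [dist_comm] at h0; exact dist_eq_zero.mp h0
      rw [hpy] at hcon
      linarith
    · push_neg at hclose
      obtain ⟨γ, hγ0, hγT, hγd⟩ := hX.1 x y
      have hd0 : (0:ℝ) ≤ dist x y := dist_nonneg
      have hs0 : (0:ℝ) ≤ dist x (π x) - 1/2 := by linarith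
      have hsT : dist x (π x) - 1/2 ≤ dist x y := by linarith
      have hxz : dist x (γ (dist x (π x) - 1/2)) = dist x (π x) - 1/2 := by
        have h := hγd 0 ⟨le_refl 0, hd0⟩ (dist x (π x) - 1/2) ⟨hs0, hsT⟩
        rw [hγ0] at h
        rw [h, abs_of_nonpos (by linarith)]; ring
      have hzy : dist (γ (dist x (π x) - 1/2)) y = dist x y - (dist x (π x) - 1/2) := by
        have h := hγd (dist x (π x) - 1/2) ⟨hs0, hsT⟩ (dist x y) ⟨hd0, le_refl _⟩
        rw [hγT] at h
        rw [h, abs_of_nonpos (by linarith)]; ring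
      have hcon := hc.2 x (γ (dist x (π x) - 1/2)) (by rw [hinf, hxz]; linarith)
      have hple : dist (π (γ (dist x (π x) - 1/2))) y ≤ dist (γ (dist x (π x) - 1/2)) y :=
        proj_le_dist hX hb hπ _ hy
      have htri : dist (π x) y ≤ dist (π x) (π (γ (dist x (π x) - 1/2))) +
          dist (π (γ (dist x (π x) - 1/2))) y := dist_triangle _ _ _
      linarith
end
end

section
/- A geodesic ray b in a proper CAT(0) space is κ-contracting if and only if it satisfies κ-slim condition 2, i.e. there exists c ≥ 0 such that for every x ∈ X and every y ∈ im(b) there is a point z on b between x_b and y with d(x_b, [x,y]) ≤ c·κ(‖z‖). -/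
open Set Metric Filter ENNReal

noncomputable section

/-- κ-slim condition 1: `d(x_b, [x,y]) ≤ c·κ(‖x_b‖)` for all `x ∈ X`, `y ∈ im(b)`. -/
def SlimCond1 {X : Type*} [MetricSpace X] (κ : ℝ → ℝ) (o : X) (b : ℝ → X) (π : X → X) : Prop :=
  ∃ c ≥ (0:ℝ), ∀ x : X, ∀ y ∈ rayIm b, infDist (π x) (seg x y) ≤ c * κ (dist o (π x))

/-- κ-slim condition 2: `d(x_b, [x,y]) ≤ c·κ(‖z‖)` for some `z` on `b` between `x_b` and `y`. -/
def SlimCond2 {X : Type*} [MetricSpace X] (κ : ℝ → ℝ) (o : X) (b : ℝ → X) (π : X → X) : Prop :=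
  ∃ c ≥ (0:ℝ), ∀ x : X, ∀ y ∈ rayIm b, ∃ z ∈ rayIm b ∩ seg (π x) y,
    infDist (π x) (seg x y) ≤ c * κ (dist o z)

/-- κ-slim condition 3: for `x y z` with `[y,z] ⊆ im(b)` and `w ∈ [y,z]`,
`d(w, [y,x] ∪ [x,z]) ≤ c·κ(‖x_b‖)`. -/
def SlimCond3 {X : Type*} [MetricSpace X] (κ : ℝ → ℝ) (o : X) (b : ℝ → X) (π : X → X) : Prop :=
  ∃ c ≥ (0:ℝ), ∀ x y z : X, seg y z ⊆ rayIm b →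
    ∀ w ∈ seg y z, infDist w (seg y x ∪ seg x z) ≤ c * κ (dist o (π x))

/-- κ-slim condition 4: for `x ∈ X` and `[y,z] ⊆ im(b)` with `‖y‖ ≤ ‖x_b‖ ≤ ‖z‖` and
`w ∈ [y,z]`, `d(w, [y,x] ∪ [x,z]) ≤ c·κ(‖z‖)`. -/
def SlimCond4 {X : Type*} [MetricSpace X] (κ : ℝ → ℝ) (o : X) (b : ℝ → X) (π : X → X) : Prop :=
  ∃ c ≥ (0:ℝ), ∀ x y z : X, seg y z ⊆ rayIm b →
    dist o y ≤ dist o (π x) → dist o (π x) ≤ dist o z →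
    ∀ w ∈ seg y z, infDist w (seg y x ∪ seg x z) ≤ c * κ (dist o z)

/-!
The CAT(0) inequality makes `u ↦ d(z, γ u)² - u²` convex along every geodesic `γ`. This gives
Stewart's inequality, uniqueness of geodesics, and the Pythagorean inequality
`d(x, x_b)² + d(x_b, y)² ≤ d(x, y)²` for `y` on the ray; in particular `x_b` is also the
projection of every point of `[x, x_b]`.

Slim ⇒ contracting. If `d(x, y) + 2E ≤ d(x, b)` and the segments `[x, y_b]`, `[y, x_b]` pass
within `E` of `x_b`, resp. `y_b`, then Stewart's inequality with apex `y` on `[x, y_b]` gives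
`d(x_b, y_b) ≤ 3E`. A pair with `d(x, y) ≤ d(x, b)` is reduced to this, applied to `(y, x)` or to
`(y, m)` and `(x, m)` for a point `m ∈ [y, x]`, unless `y` is already `O(E)`-close to `b`.

Contracting ⇒ slim. Let `x' ∈ [x, y]` have its projection `E`-close to `x_b`. Walk from `x'`
towards `y` twice, each time by the current distance to `b`, reaching `w₁` and then `w₂`; each
step moves the projection by at most `E`. The first step gives `d(w₁, y) ≤ d(x'_b, y)`, the second
lowers the distance to `y` by exactly `d(w₁, b)`, and `d(w₂_b, y) ≤ d(w₂, y)` by Pythagoras; hence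
`d(w₁, b) ≤ d(x'_b, w₂_b) ≤ 2E`, and `w₁ ∈ [x, y]` is `4E`-close to `x_b`. For `x'` take `x`
itself or, if `d(x, b) > 2 d(x_b, y)`, the point of `[x, y]` at distance `2 d(x_b, y)` from `y`:
by comparison it is close to the proportional point of `[x, x_b]`, which projects to `x_b` and is
far enough from `b` for the contraction to apply.
-/

open Topology

theorem nonpos_of_midpoint_convex {h : ℝ → ℝ} {L : ℝ} (hc : ContinuousOn h (Icc 0 L))
    (hmid : ∀ u ∈ Icc 0 L, ∀ v ∈ Icc 0 L, h ((u + v) / 2) ≤ (h u + h v) / 2)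
    (h0 : h 0 ≤ 0) (hL : h L ≤ 0) {t : ℝ} (ht : t ∈ Icc 0 L) : h t ≤ 0 := by
  obtain ⟨a, ha, hmax⟩ := isCompact_Icc.exists_isMaxOn ⟨t, ht⟩ hc
  by_contra! hpos
  have hM : 0 < h a := hpos.trans_le (hmax ht)
  -- the leftmost maximiser is the midpoint of two points of `[0, L]`, the left one a maximiser too
  set A := Icc 0 L ∩ h ⁻¹' {h a}
  have hA : IsCompact A := isCompact_Icc.of_isClosed_subset
    (hc.preimage_isClosed_of_isClosed isClosed_Icc isClosed_singleton) inter_subset_left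
  obtain ⟨⟨ha0, haL⟩, hha⟩ : sInf A ∈ A := hA.sInf_mem ⟨a, ha, rfl⟩
  set a' := sInf A
  replace hha : h a' = h a := hha
  have hpos0 : 0 < a' := lt_of_le_of_ne ha0 fun h' => by rw [← h'] at hha; linarith
  have hposL : a' < L := lt_of_le_of_ne haL fun h' => by rw [h'] at hha; linarith
  set r := min a' (L - a')
  have hr : 0 < r := lt_min hpos0 (by linarith)
  have hu : a' - r ∈ Icc 0 L := ⟨by linarith [min_le_left a' (L - a')], by linarith⟩
  have hv : a' + r ∈ Icc 0 L := ⟨by linarith, by linarith [min_le_right a' (L - a')]⟩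
  have hmid' := hmid _ hu _ hv
  rw [show (a' - r + (a' + r)) / 2 = a' by ring, hha] at hmid'
  have hright : h (a' + r) ≤ h a := hmax hv
  have hleft : a' - r ∈ A := ⟨hu, le_antisymm (hmax hu) (by linarith)⟩
  linarith [csInf_le hA.bddBelow hleft]

theorem le_chord_of_midpoint_convex {f : ℝ → ℝ} {L : ℝ} (hf : ContinuousOn f (Icc 0 L))
    (hmid : ∀ u ∈ Icc 0 L, ∀ v ∈ Icc 0 L, f ((u + v) / 2) ≤ (f u + f v) / 2)
    {t : ℝ} (ht : t ∈ Icc 0 L) : L * f t ≤ (L - t) * f 0 + t * f L := by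
  have := nonpos_of_midpoint_convex (h := fun u => L * f u - ((L - u) * f 0 + u * f L))
    (by fun_prop) (fun u hu v hv => ?_) (by simp) (by simp) ht
  · simpa [sub_nonpos] using this
  · have := hmid u hu v hv
    have hL : 0 ≤ L := hu.1.trans hu.2
    nlinarith

theorem le_max_of_abs_sub_add_abs_sub_eq {u v w : ℝ} (h : |u - w| + |w - v| = |u - v|) :
    w ≤ max u v := by
  have h1 := neg_abs_le (u - w)
  have h2 := le_abs_self (w - v)
  rcases le_total u v with huv | huv
  · rw [abs_of_nonpos (sub_nonpos.2 huv)] at h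
    linarith [le_max_right u v]
  · rw [abs_of_nonneg (sub_nonneg.2 huv)] at h
    linarith [le_max_left u v]

section Seg

variable {X : Type*} [MetricSpace X] {γ : ℝ → X} {L : ℝ}

theorem left_mem_seg (x y : X) : x ∈ seg x y := by simp [seg]

theorem right_mem_seg (x y : X) : y ∈ seg x y := by simp [seg]

theorem mem_seg_trans {x y w w' : X} (hw : w ∈ seg x y) (hw' : w' ∈ seg w y) :
    w' ∈ seg x y := by
  have := dist_triangle x w w'
  have := dist_triangle x w' y
  simp only [seg, mem_ofPred_eq] at *
  linarith

theorem dist_mem_seg_right {x y w : X} (hw : w ∈ seg x y) : dist w y = dist x y - dist x w := by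
  simp only [seg, mem_ofPred_eq] at hw
  linarith

theorem dist_geodesic_zero
    (hγ : ∀ s ∈ Icc (0:ℝ) L, ∀ t ∈ Icc (0:ℝ) L, dist (γ s) (γ t) = |s - t|) {u : ℝ}
    (hu : u ∈ Icc 0 L) : dist (γ 0) (γ u) = u := by
  rw [hγ 0 ⟨le_rfl, hu.1.trans hu.2⟩ u hu, zero_sub, abs_neg, abs_of_nonneg hu.1]

theorem geodesic_mem_seg
    (hγ : ∀ s ∈ Icc (0:ℝ) L, ∀ t ∈ Icc (0:ℝ) L, dist (γ s) (γ t) = |s - t|) {u : ℝ}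
    (hu : u ∈ Icc 0 L) : γ u ∈ seg (γ 0) (γ L) := by
  have hL : L ∈ Icc 0 L := ⟨hu.1.trans hu.2, le_rfl⟩
  simp only [seg, mem_ofPred_eq]
  rw [dist_geodesic_zero hγ hu, dist_geodesic_zero hγ hL, hγ u hu L hL,
    abs_of_nonpos (by linarith [hu.2])]
  ring

theorem continuousOn_geodesic
    (hγ : ∀ s ∈ Icc (0:ℝ) L, ∀ t ∈ Icc (0:ℝ) L, dist (γ s) (γ t) = |s - t|) :
    ContinuousOn γ (Icc 0 L) :=
  (LipschitzOnWith.of_dist_le_mul (K := 1) fun s hs t ht => by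
    simp [hγ s hs t ht, Real.dist_eq]).continuousOn

theorem GeodesicSpace.exists_mem_seg_dist_eq (hgeo : GeodesicSpace X) (x y : X) {τ : ℝ}
    (h0 : 0 ≤ τ) (hτ : τ ≤ dist x y) : ∃ w ∈ seg x y, dist x w = τ := by
  obtain ⟨γ, hγ0, hγL, hγ⟩ := hgeo x y
  refine ⟨γ τ, ?_, ?_⟩
  · simpa [hγ0, hγL] using geodesic_mem_seg hγ ⟨h0, hτ⟩
  · simpa [hγ0] using dist_geodesic_zero hγ ⟨h0, hτ⟩

end Seg

section Ray

variable {X : Type*} [MetricSpace X] {b : ℝ → X} {o : X} {π : X → X}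

theorem IsGeodesicRay.dist_base (hb : IsGeodesicRay b) (hb0 : b 0 = o) {u : ℝ} (hu : 0 ≤ u) :
    dist o (b u) = u := by
  rw [← hb0, hb 0 u le_rfl hu, zero_sub, abs_neg, abs_of_nonneg hu]

theorem IsGeodesicRay.dist_base_le_max (hb : IsGeodesicRay b) (hb0 : b 0 = o) {p q z : X}
    (hp : p ∈ rayIm b) (hq : q ∈ rayIm b) (hz : z ∈ rayIm b ∩ seg p q) :
    dist o z ≤ max (dist o p) (dist o q) := by
  obtain ⟨u, hu, rfl⟩ := hp
  obtain ⟨v, hv, rfl⟩ := hq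
  obtain ⟨⟨w, hw, rfl⟩, hzs⟩ := hz
  simp only [seg, mem_ofPred_eq, hb u w hu hw, hb w v hw hv, hb u v hu hv] at hzs
  rw [hb.dist_base hb0 hu, hb.dist_base hb0 hv, hb.dist_base hb0 hw]
  exact le_max_of_abs_sub_add_abs_sub_eq hzs

theorem infDist_rayIm_le (hb0 : b 0 = o) (x : X) : infDist x (rayIm b) ≤ dist o x :=
  dist_comm x o ▸ infDist_le_dist_of_mem ⟨0, mem_Ici.2 le_rfl, hb0⟩

theorem IsProj.dist_base_le (hb0 : b 0 = o) (hπ : IsProj b π) (x : X) :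
    dist o (π x) ≤ 2 * dist o x := by
  linarith [dist_triangle o x (π x), (hπ x).2, infDist_rayIm_le hb0 x]

end Ray

namespace IsCAT0

variable {X : Type*} [MetricSpace X] {b : ℝ → X} {π : X → X}

theorem eq_of_mem_seg (hX : IsCAT0 X) {x y w w' : X} (hw : w ∈ seg x y) (hw' : w' ∈ seg x y)
    (h : dist x w = dist x w') : w = w' := by
  obtain ⟨m, hm, hwm⟩ := hX.1.exists_mem_seg_dist_eq w w' (by positivity)
    (half_le_self dist_nonneg)
  have hmw' : dist m w' = dist w w' / 2 := by rw [dist_mem_seg_right hm, hwm]; ring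
  have hx := hX.2 x w w' m hwm hmw'
  have hy := hX.2 y w w' m hwm hmw'
  rw [dist_comm y w, dist_mem_seg_right hw, dist_comm y w', dist_mem_seg_right hw', ← h] at hy
  rw [← h] at hx
  have hwy : 0 ≤ dist x y - dist x w := by rw [← dist_mem_seg_right hw]; exact dist_nonneg
  -- the comparison at `y` gives `d(y,m) ≤ d(w,y)`, hence `d(x,m) ≥ d(x,w)`
  have hym : dist y m ≤ dist x y - dist x w :=
    (pow_le_pow_iff_left₀ dist_nonneg hwy two_ne_zero).1 (by nlinarith [sq_nonneg (dist w w')])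
  have hxm : dist x w ≤ dist x m := by linarith [dist_triangle x m y, dist_comm m y]
  have hww' : dist w w' ^ 2 ≤ 0 := by nlinarith [dist_nonneg (x := x) (y := w)]
  exact dist_eq_zero.1 (pow_eq_zero_iff two_ne_zero |>.1 (le_antisymm hww' (sq_nonneg _)))

theorem seg_eq_image (hX : IsCAT0 X) {x y : X} {γ : ℝ → X} (hγ0 : γ 0 = x)
    (hγL : γ (dist x y) = y)
    (hγ : ∀ s ∈ Icc (0:ℝ) (dist x y), ∀ t ∈ Icc (0:ℝ) (dist x y), dist (γ s) (γ t) = |s - t|) :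
    seg x y = γ '' Icc 0 (dist x y) := by
  apply Subset.antisymm
  · intro w hw
    have ha : dist x w ∈ Icc 0 (dist x y) :=
      ⟨dist_nonneg, by linarith [dist_mem_seg_right hw, dist_nonneg (x := w) (y := y)]⟩
    refine ⟨dist x w, ha, hX.eq_of_mem_seg ?_ hw ?_⟩
    · simpa [hγ0, hγL] using geodesic_mem_seg hγ ha
    · simpa [hγ0] using dist_geodesic_zero hγ ha
  · rintro _ ⟨u, hu, rfl⟩
    simpa [hγ0, hγL] using geodesic_mem_seg hγ hu

theorem isCompact_seg (hX : IsCAT0 X) (x y : X) : IsCompact (seg x y) := by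
  obtain ⟨γ, hγ0, hγL, hγ⟩ := hX.1 x y
  rw [hX.seg_eq_image hγ0 hγL hγ]
  exact isCompact_Icc.image_of_continuousOn (continuousOn_geodesic hγ)

theorem sq_dist_geodesic_midpoint_le (hX : IsCAT0 X) (z : X) {γ : ℝ → X} {L : ℝ}
    (hγ : ∀ s ∈ Icc (0:ℝ) L, ∀ t ∈ Icc (0:ℝ) L, dist (γ s) (γ t) = |s - t|)
    {u v : ℝ} (hu : u ∈ Icc 0 L) (hv : v ∈ Icc 0 L) :
    dist z (γ ((u + v) / 2)) ^ 2 - ((u + v) / 2) ^ 2 ≤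
      ((dist z (γ u) ^ 2 - u ^ 2) + (dist z (γ v) ^ 2 - v ^ 2)) / 2 := by
  have hm : (u + v) / 2 ∈ Icc 0 L := ⟨by linarith [hu.1, hv.1], by linarith [hu.2, hv.2]⟩
  have h1 : dist (γ u) (γ ((u + v) / 2)) = dist (γ u) (γ v) / 2 := by
    rw [hγ u hu _ hm, hγ u hu v hv, show u - (u + v) / 2 = (u - v) / 2 by ring, abs_div, abs_two]
  have h2 : dist (γ ((u + v) / 2)) (γ v) = dist (γ u) (γ v) / 2 := by
    rw [hγ _ hm v hv, hγ u hu v hv, show (u + v) / 2 - v = (u - v) / 2 by ring, abs_div, abs_two]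
  have := hX.2 z _ _ _ h1 h2
  rw [hγ u hu v hv, sq_abs] at this
  linarith

theorem stewart (hX : IsCAT0 X) (z : X) {x q w : X} (hw : w ∈ seg x q) :
    dist x q * dist z w ^ 2 ≤ (dist x q - dist x w) * dist z x ^ 2 + dist x w * dist z q ^ 2
      - dist x w * (dist x q - dist x w) * dist x q := by
  obtain ⟨γ, hγ0, hγL, hγ⟩ := hX.1 x q
  obtain ⟨a, ha, rfl⟩ : w ∈ γ '' Icc 0 (dist x q) := hX.seg_eq_image hγ0 hγL hγ ▸ hw
  have hxa : dist x (γ a) = a := hγ0 ▸ dist_geodesic_zero hγ ha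
  have hγc := continuousOn_geodesic hγ
  have := le_chord_of_midpoint_convex (f := fun u => dist z (γ u) ^ 2 - u ^ 2) (by fun_prop)
    (fun u hu v hv => hX.sq_dist_geodesic_midpoint_le z hγ hu hv) ha
  simp only [hγ0, hγL] at this
  rw [hxa]
  linear_combination this

theorem dist_le_of_proportional_mem_seg (hX : IsCAT0 X) {x p y ξ x' : X} {μ : ℝ}
    (hξ : ξ ∈ seg x p) (hx' : x' ∈ seg x y) (hp : 0 < dist x p) (hy : 0 < dist x y)
    (hξμ : dist x ξ = μ * dist x p) (hx'μ : dist x x' = μ * dist x y) (hμ : 0 ≤ μ) :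
    dist ξ x' ≤ μ * dist p y := by
  have h1 := hX.stewart ξ hx'
  have h2 := hX.stewart y hξ
  rw [hx'μ, dist_comm ξ x, hξμ] at h1
  rw [hξμ, dist_comm y x, dist_comm y p, dist_comm y ξ] at h2
  have h2' : dist ξ y ^ 2 ≤ (1 - μ) * dist x y ^ 2 + μ * dist p y ^ 2
      - μ * (1 - μ) * dist x p ^ 2 :=
    le_of_mul_le_mul_left (by linear_combination h2) hp
  have h1' : dist ξ x' ^ 2 ≤ (1 - μ) * (μ * dist x p) ^ 2 + μ * dist ξ y ^ 2
      - μ * (1 - μ) * dist x y ^ 2 :=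
    le_of_mul_le_mul_left (by linear_combination h1) hy
  refine (pow_le_pow_iff_left₀ dist_nonneg (by positivity) two_ne_zero).1 ?_
  nlinarith [mul_le_mul_of_nonneg_left h2' hμ]

theorem sq_dist_proj_add_sq_le (hX : IsCAT0 X) (hb : IsGeodesicRay b) (hπ : IsProj b π) (v : X)
    {y : X} (hy : y ∈ rayIm b) : dist v (π v) ^ 2 + dist (π v) y ^ 2 ≤ dist v y ^ 2 := by
  obtain ⟨s, hs, hsv⟩ := (hπ v).1
  obtain ⟨r, hr, rfl⟩ := hy
  have hs : (0:ℝ) ≤ s := hs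
  have hr : (0:ℝ) ≤ r := hr
  set L := dist (π v) (b r) with hLdef
  have hL : L = |s - r| := by rw [hLdef, ← hsv]; exact hb s r hs hr
  have hnear : ∀ w ∈ rayIm b, dist v (π v) ≤ dist v w := fun w hw =>
    (hπ v).2 ▸ infDist_le_dist_of_mem hw
  -- Stewart's inequality at the points `b (s + a (r - s))`, `0 < a ≤ 1`, then let `a → 0`
  have key : ∀ a ∈ Ioc (0:ℝ) 1, dist v (π v) ^ 2 + L ^ 2 ≤ dist v (b r) ^ 2 + a * L ^ 2 := by
    rintro a ⟨ha0, ha1⟩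
    rcases (dist_nonneg : 0 ≤ L).eq_or_lt with hL0 | hL0
    · rw [← show 0 = L from hL0]
      nlinarith [hnear _ ⟨r, hr, rfl⟩, dist_nonneg (x := v) (y := π v)]
    set t := s + a * (r - s)
    have ht : 0 ≤ t := by nlinarith
    have hst : dist (π v) (b t) = a * L := by
      rw [← hsv, hb s t hs ht, hL, show s - t = a * (s - r) by ring, abs_mul, abs_of_pos ha0]
    have htr : dist (b t) (b r) = (1 - a) * L := by
      rw [hb t r ht hr, hL, show t - r = (1 - a) * (s - r) by ring, abs_mul,
        abs_of_nonneg (sub_nonneg.2 ha1)]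
    have hseg : b t ∈ seg (π v) (b r) := by
      change _ + _ = _
      rw [hst, htr]; ring
    have hst' := hX.stewart v hseg
    rw [hst] at hst'
    have hvt := hnear _ ⟨t, ht, rfl⟩
    nlinarith [mul_le_mul_of_nonneg_left (pow_le_pow_left₀ dist_nonneg hvt 2) hL0.le,
      mul_pos ha0 hL0]
  have hlim : Tendsto (fun a => dist v (b r) ^ 2 + a * L ^ 2) (𝓝[>] 0) (𝓝 (dist v (b r) ^ 2)) := by
    have : Continuous fun a => dist v (b r) ^ 2 + a * L ^ 2 := by fun_prop
    simpa using (this.tendsto 0).mono_left nhdsWithin_le_nhds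
  exact ge_of_tendsto hlim (eventually_of_mem (Ioc_mem_nhdsGT one_pos) key)

theorem dist_proj_le (hX : IsCAT0 X) (hb : IsGeodesicRay b) (hπ : IsProj b π) (v : X) {y : X}
    (hy : y ∈ rayIm b) : dist (π v) y ≤ dist v y :=
  (pow_le_pow_iff_left₀ dist_nonneg dist_nonneg two_ne_zero).1
    (by nlinarith [hX.sq_dist_proj_add_sq_le hb hπ v hy, sq_nonneg (dist v (π v))])

theorem proj_eq_of_mem_seg (hX : IsCAT0 X) (hb : IsGeodesicRay b) (hπ : IsProj b π) {x ξ : X}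
    (hξ : ξ ∈ seg x (π x)) : π ξ = π x := by
  have hξ' : dist x ξ + dist ξ (π x) = dist x (π x) := hξ
  have hnear : dist ξ (π x) ≤ dist ξ (π ξ) := by
    rw [(hπ ξ).2]
    linarith [infDist_le_infDist_add_dist (x := x) (y := ξ) (s := rayIm b), (hπ x).2]
  have h := hX.sq_dist_proj_add_sq_le hb hπ ξ (hπ x).1
  have h0 : dist (π ξ) (π x) ^ 2 ≤ 0 := by
    nlinarith [pow_le_pow_left₀ dist_nonneg hnear 2]
  exact dist_eq_zero.1 (pow_eq_zero_iff two_ne_zero |>.1 (le_antisymm h0 (sq_nonneg _)))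

theorem dist_le_of_near_seg (hX : IsCAT0 X) {α β p q : X} {E : ℝ}
    (hpq : dist α p ≤ dist α q) (hfar : dist α β + 2 * E ≤ dist α p)
    (hw : ∃ w ∈ seg α q, dist p w ≤ E) (hw' : ∃ w' ∈ seg β p, dist q w' ≤ E) :
    dist p q ≤ 3 * E := by
  obtain ⟨w, hw, hpw⟩ := hw
  obtain ⟨w', hw', hqw'⟩ := hw'
  have hw's : dist β w' + dist w' p = dist β p := hw'
  have hβw : dist β q + dist p q - 3 * E ≤ dist β w := by
    linarith [dist_triangle β w' q, dist_triangle p w' q, dist_comm w' q, dist_comm p w',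
      dist_triangle β w p, dist_comm w p]
  have hαw : dist α β ≤ dist α w := by
    linarith [dist_triangle α w p, dist_comm w p, dist_nonneg (x := p) (y := w)]
  have hwq := dist_mem_seg_right hw
  have haq : 0 ≤ dist α q - dist α w := by rw [← hwq]; exact dist_nonneg
  rcases (dist_nonneg : 0 ≤ dist α q).eq_or_lt with hq | hq
  · linarith [dist_triangle p α q, dist_comm p α, dist_nonneg (x := p) (y := w)]
  -- Stewart's inequality at `w ∈ [α, q]` with apex `β` forces `d(β, w) ≤ d(β, q)`
  have hS := hX.stewart β hw
  rw [dist_comm β α] at hS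
  have hsq : dist β w ^ 2 ≤ dist β q ^ 2 := by
    refine le_of_mul_le_mul_left ?_ hq
    nlinarith [mul_le_mul_of_nonneg_left (pow_le_pow_left₀ dist_nonneg hαw 2) haq,
      mul_le_mul_of_nonneg_right (sub_nonneg.1 haq) (sq_nonneg (dist β q)),
      mul_nonneg (dist_nonneg : 0 ≤ dist α w) (sq_nonneg (dist α q - dist α w))]
  linarith [(pow_le_pow_iff_left₀ dist_nonneg dist_nonneg two_ne_zero).1 hsq]

theorem infDist_proj_seg_le (hX : IsCAT0 X) (hb : IsGeodesicRay b) (hπ : IsProj b π)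
    {x y x' : X} {E : ℝ} (hy : y ∈ rayIm b) (hx' : x' ∈ seg x y)
    (hjump : ∀ v w, dist v y ≤ dist x' y → dist v w ≤ infDist v (rayIm b) →
      dist (π v) (π w) ≤ E) :
    infDist (π x) (seg x y) ≤ dist (π x) (π x') + 3 * E := by
  obtain ⟨w₁, hw₁, hx'w₁⟩ :=
    hX.1.exists_mem_seg_dist_eq x' y infDist_nonneg (infDist_le_dist_of_mem hy)
  obtain ⟨w₂, hw₂, hw₁w₂⟩ :=
    hX.1.exists_mem_seg_dist_eq w₁ y infDist_nonneg (infDist_le_dist_of_mem hy)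
  have hw₁y := dist_mem_seg_right hw₁
  have hw₂y := dist_mem_seg_right hw₂
  have hJ₁ := hjump x' w₁ le_rfl hx'w₁.le
  have hJ₂ := hjump w₁ w₂ (by linarith [infDist_nonneg (x := x') (s := rayIm b)]) hw₁w₂.le
  have hw₁b : infDist w₁ (rayIm b) ≤ 2 * E := by
    linarith [hX.dist_proj_le hb hπ w₂ hy, dist_triangle4 (π x') (π w₁) (π w₂) y,
      dist_triangle x' (π x') y, (hπ x').2]
  calc infDist (π x) (seg x y) ≤ dist (π x) w₁ := infDist_le_dist_of_mem (mem_seg_trans hx' hw₁)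
    _ ≤ dist (π x) (π x') + dist (π x') (π w₁) + dist (π w₁) w₁ := dist_triangle4 _ _ _ _
    _ ≤ dist (π x) (π x') + 3 * E := by linarith [(hπ w₁).2, dist_comm w₁ (π w₁)]

theorem exists_mem_seg_near_proj (hX : IsCAT0 X) (hb : IsGeodesicRay b) (hπ : IsProj b π)
    {x y : X} {E : ℝ} (hE : 0 ≤ E) (hy : y ∈ rayIm b)
    (hjump : ∀ v w, dist v y ≤ 3 * dist (π x) y → dist v w ≤ infDist v (rayIm b) →
      dist (π v) (π w) ≤ E) :
    ∃ x' ∈ seg x y, dist x' y ≤ 3 * dist (π x) y ∧ dist (π x) (π x') ≤ E := by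
  set Δ := dist (π x) y
  set d := dist x (π x)
  set L := dist x y
  have hL : L ≤ d + Δ := dist_triangle _ _ _
  have hdL : d ≤ L := by
    rw [show d = infDist x (rayIm b) from (hπ x).2]; exact infDist_le_dist_of_mem hy
  have hΔ : 0 ≤ Δ := dist_nonneg
  rcases le_or_gt d (2 * Δ) with hd | hd
  · exact ⟨x, left_mem_seg x y, by linarith, by simpa using hE⟩
  have hL0 : 0 < L := by linarith
  -- `x' ∈ [x, y]` at distance `2Δ` from `y`, and the proportional point `ξ ∈ [x, π x]`
  set μ := 1 - 2 * Δ / L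
  have hμL : μ * L = L - 2 * Δ := by simp only [μ]; field_simp
  have hμ0 : 0 ≤ μ := sub_nonneg.2 ((div_le_one hL0).2 (by linarith))
  obtain ⟨x', hx', hxx'⟩ :=
    hX.1.exists_mem_seg_dist_eq x y (τ := μ * L) (mul_nonneg hμ0 hL0.le) (by nlinarith)
  obtain ⟨ξ, hξ, hxξ⟩ :=
    hX.1.exists_mem_seg_dist_eq x (π x) (τ := μ * d) (mul_nonneg hμ0 dist_nonneg) (by nlinarith)
  have hξx' := hX.dist_le_of_proportional_mem_seg hξ hx' (by linarith) hL0 hxξ hxx' hμ0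
  have hπξ := hX.proj_eq_of_mem_seg hb hπ hξ
  have hξp : dist ξ (π x) = (1 - μ) * d := by rw [dist_mem_seg_right hξ, hxξ]; ring
  have h1 : Δ ≤ (1 - μ) * d := by
    refine le_of_mul_le_mul_right ?_ hL0
    nlinarith [mul_le_mul_of_nonneg_left (show L ≤ 2 * d by linarith) hΔ]
  have h2 : (1 - μ) * d ≤ 2 * Δ := by nlinarith
  refine ⟨x', hx', by linarith [dist_mem_seg_right hx'], ?_⟩
  rw [← hπξ]
  refine hjump ξ x' (by linarith [dist_triangle ξ (π x) y]) ?_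
  rw [← (hπ ξ).2, hπξ, hξp]
  nlinarith

end IsCAT0

theorem IsSublinearFn.nonneg {κ : ℝ → ℝ} (hκ : IsSublinearFn κ) (t : ℝ) : 0 ≤ κ t :=
  zero_le_one.trans (hκ.one_le t)

theorem IsSublinearFn.apply_mul_le {κ : ℝ → ℝ} (hκ : IsSublinearFn κ) {u l : ℝ} (hu : 0 ≤ u)
    (hl : 1 ≤ l) : κ (l * u) ≤ l * κ u := by
  have hl0 : 0 < l := by linarith
  have hl1 : 0 ≤ 1 - l⁻¹ := sub_nonneg.2 (inv_le_one_of_one_le₀ hl)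
  have := hκ.concave.2 (mem_Ici.2 (by positivity : 0 ≤ l * u)) (mem_Ici.2 le_rfl)
    (inv_nonneg.2 hl0.le) hl1 (add_sub_cancel _ _)
  simp only [smul_eq_mul, mul_zero, add_zero, inv_mul_cancel_left₀ hl0.ne'] at this
  calc κ (l * u) = l * (l⁻¹ * κ (l * u)) := by field_simp
    _ ≤ l * κ u := mul_le_mul_of_nonneg_left (by nlinarith [hκ.nonneg 0]) hl0.le

section Directions

variable {X : Type*} [MetricSpace X] {o : X} {κ : ℝ → ℝ} {b : ℝ → X} {π : X → X}

theorem exists_mem_seg_dist_proj_le (hX : IsCAT0 X) (hκ : Monotone κ) (hb : IsGeodesicRay b)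
    (hb0 : b 0 = o) (hπ : IsProj b π) {c : ℝ} (hc : 0 ≤ c)
    (hslim : ∀ x : X, ∀ y ∈ rayIm b, ∃ z ∈ rayIm b ∩ seg (π x) y,
      infDist (π x) (seg x y) ≤ c * κ (dist o z))
    {α β : X} {R : ℝ} (hα : dist o (π α) ≤ R) (hβ : dist o (π β) ≤ R) :
    ∃ w ∈ seg α (π β), dist (π α) w ≤ c * κ R := by
  obtain ⟨z, hz, hzE⟩ := hslim α (π β) (hπ β).1
  obtain ⟨w, hw, hdw⟩ := (hX.isCompact_seg α (π β)).exists_infDist_eq_dist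
    ⟨α, left_mem_seg α (π β)⟩ (π α)
  refine ⟨w, hw, hdw ▸ hzE.trans (mul_le_mul_of_nonneg_left (hκ ?_) hc)⟩
  exact (hb.dist_base_le_max hb0 (hπ α).1 (hπ β).1 hz).trans (max_le hα hβ)

theorem kappaContracting_of_slimCond2 (hX : IsCAT0 X) (hκ : IsSublinearFn κ)
    (hb : IsGeodesicRay b) (hb0 : b 0 = o) (hπ : IsProj b π) (hslim : SlimCond2 κ o b π) :
    KappaContracting κ o b π := by
  obtain ⟨c, hc, hslim⟩ := hslim
  refine ⟨32 * c, by positivity, fun x y hxy => ?_⟩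
  set E := c * κ (4 * dist o x)
  have hE0 : 0 ≤ E := mul_nonneg hc (hκ.nonneg _)
  have hE : E ≤ 4 * (c * κ (dist o x)) := by
    linarith [mul_le_mul_of_nonneg_left
      (hκ.apply_mul_le (dist_nonneg (x := o) (y := x)) (by norm_num : (1:ℝ) ≤ 4)) hc]
  have hxb : dist x (π x) = infDist x (rayIm b) := (hπ x).2
  have hx : dist o x ≤ 2 * dist o x := by linarith [dist_nonneg (x := o) (y := x)]
  have hy : dist o y ≤ 2 * dist o x := by
    linarith [dist_triangle o x y, infDist_rayIm_le hb0 x]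
  have near : ∀ α β, dist o α ≤ 2 * dist o x → dist o β ≤ 2 * dist o x →
      ∃ w ∈ seg α (π β), dist (π α) w ≤ E := fun α β hα hβ =>
    exists_mem_seg_dist_proj_le hX hκ.mono hb hb0 hπ hc hslim
      (by linarith [hπ.dist_base_le hb0 α]) (by linarith [hπ.dist_base_le hb0 β])
  have close : ∀ α β, dist o α ≤ 2 * dist o x → dist o β ≤ 2 * dist o x →
      dist α β + 2 * E ≤ infDist α (rayIm b) → dist (π α) (π β) ≤ 3 * E :=
    fun α β hα hβ hfar => hX.dist_le_of_near_seg
      ((hπ α).2 ▸ infDist_le_dist_of_mem (hπ β).1) ((hπ α).2 ▸ hfar)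
      (near α β hα hβ) (near β α hβ hα)
  suffices dist (π x) (π y) ≤ 8 * E by linarith
  set G := infDist y (rayIm b)
  have hyb : dist y (π y) = G := (hπ y).2
  rcases le_or_gt G (6 * E) with hG | hG
  · obtain ⟨w, hw, hxw⟩ := near x y hx hy
    linarith [dist_triangle (π x) w (π y), dist_mem_seg_right hw, dist_triangle x w (π x),
      dist_comm w (π x), dist_triangle x y (π y)]
  rcases le_or_gt (dist y x + 2 * E) G with hyx | hyx
  · linarith [close y x hy hx hyx, dist_comm (π x) (π y)]
  obtain ⟨m, hm, hym⟩ := hX.1.exists_mem_seg_dist_eq y x (τ := G - 3 * E) (by linarith)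
    (by linarith)
  have hmx := dist_mem_seg_right hm
  have hmo : dist o m ≤ 2 * dist o x := by
    linarith [dist_triangle o x m, dist_comm x m, dist_comm x y, infDist_rayIm_le hb0 x]
  have h1 := close y m hy hmo (by linarith)
  have h2 := close x m hx hmo (by linarith [dist_comm x m, dist_comm x y])
  linarith [dist_triangle (π x) (π m) (π y), dist_comm (π y) (π m)]

theorem slimCond2_of_kappaContracting (hX : IsCAT0 X) (hκ : IsSublinearFn κ)
    (hb : IsGeodesicRay b) (hb0 : b 0 = o) (hπ : IsProj b π) (hcon : KappaContracting κ o b π) :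
    SlimCond2 κ o b π := by
  obtain ⟨c, hc, hcon⟩ := hcon
  refine ⟨16 * c, by positivity, ?_⟩
  rintro x _ ⟨r, hr, rfl⟩
  obtain ⟨s, hs, hsx⟩ := (hπ x).1
  have hs : (0:ℝ) ≤ s := hs
  have hr : (0:ℝ) ≤ r := hr
  set M := max s r
  set E := c * κ (4 * M)
  have hΔ : dist (π x) (b r) ≤ M := by
    rw [← hsx, hb s r hs hr, abs_sub_le_iff]
    constructor <;> linarith [le_max_left s r, le_max_right s r]
  -- all points involved lie within `3 d(π x, b r)` of `b r`, hence have norm at most `4M`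
  have hjump : ∀ v w, dist v (b r) ≤ 3 * dist (π x) (b r) → dist v w ≤ infDist v (rayIm b) →
      dist (π v) (π w) ≤ E := by
    intro v w hv hvw
    refine (hcon v w hvw).trans (mul_le_mul_of_nonneg_left (hκ.mono ?_) hc)
    linarith [dist_triangle o (b r) v, hb.dist_base hb0 hr, dist_comm (b r) v, le_max_right s r]
  obtain ⟨x', hx', hx'y, hxx'⟩ :=
    hX.exists_mem_seg_near_proj hb hπ (mul_nonneg hc (hκ.nonneg _)) ⟨r, hr, rfl⟩ hjump
  have hnear :=
    hX.infDist_proj_seg_le hb hπ ⟨r, hr, rfl⟩ hx' fun v w hv => hjump v w (hv.trans hx'y)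
  have hE : 4 * E ≤ 16 * c * κ M := by
    nlinarith [mul_le_mul_of_nonneg_left (hκ.apply_mul_le (hs.trans (le_max_left s r))
      (by norm_num : (1:ℝ) ≤ 4)) hc]
  rcases max_choice s r with hM | hM
  · refine ⟨π x, ⟨(hπ x).1, left_mem_seg _ _⟩, ?_⟩
    rw [show dist o (π x) = M by rw [← hsx, hb.dist_base hb0 hs]; exact hM.symm]
    linarith
  · refine ⟨b r, ⟨⟨r, hr, rfl⟩, right_mem_seg _ _⟩, ?_⟩
    rw [show dist o (b r) = M by rw [hb.dist_base hb0 hr]; exact hM.symm]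
    linarith

end Directions

theorem contracting_iff_slim2_general
    {X : Type*} [MetricSpace X] (hX : IsCAT0 X)
    (o : X) (κ : ℝ → ℝ) (hκ : IsSublinearFn κ)
    (b : ℝ → X) (hb : IsGeodesicRay b) (hb0 : b 0 = o)
    (π : X → X) (hπ : IsProj b π) :
    KappaContracting κ o b π ↔ SlimCond2 κ o b π :=
  ⟨slimCond2_of_kappaContracting hX hκ hb hb0 hπ, kappaContracting_of_slimCond2 hX hκ hb hb0 hπ⟩

/-- Proposition 3.6. A geodesic ray `b` in a proper CAT(0) space is
`κ`-contracting iff it satisfies κ-slim condition 2. -/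
theorem contracting_iff_slim2
    {X : Type*} [MetricSpace X] [ProperSpace X] (hX : IsCAT0 X)
    (o : X) (κ : ℝ → ℝ) (hκ : IsSublinearFn κ)
    (b : ℝ → X) (hb : IsGeodesicRay b) (hb0 : b 0 = o)
    (π : X → X) (hπ : IsProj b π) :
    KappaContracting κ o b π ↔ SlimCond2 κ o b π :=
  contracting_iff_slim2_general hX o κ hκ b hb hb0 π hπ
end
end
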